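/- Let S be a subsemigroup of B(n) containing 0. Then there exist a unique inverse subsemigroup I of B(n) and a unique nilpotent subsemigroup N of B(n) such that I is a subsemigroup of S, N is a two-sided ideal of S, and S = I ∪ N. -/

import Mathlib

/-- The aperiodic Brandt semigroup `B(n)` on `({1..n} × {1..n}) ∪ {0}`,
with `none` playing the role of the zero element. -/
abbrev B (n : ℕ) := Option (Fin n × Fin n)

/-- Multiplication in `B(n)`: `(i,j)(k,l) = (i,l)` if `j = k`, and `0` otherwise. -/
def bmul {n : ℕ} : B n → B n → B n
  | some (i, j), some (k, l) => if j = k then some (i, l) else none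
  | _, _ => none

/-- A subset of `B(n)` is a subsemigroup if it is closed under multiplication. -/
def IsSub {n : ℕ} (T : Set (B n)) : Prop :=
  ∀ x ∈ T, ∀ y ∈ T, bmul x y ∈ T

/-- The subsemigroup of `B(n)` generated by a subset. -/
def gen {n : ℕ} (X : Set (B n)) : Set (B n) :=
  ⋂₀ {T | IsSub T ∧ X ⊆ T}

/-- `X` is a face of the subsemigroup complex `H(B(n))`: it admits an enumeration
producing a strictly increasing chain of generated subsemigroups. -/
def IsFace {n : ℕ} (X : Set (B n)) : Prop :=
  ∃ l : List (B n), l.Nodup ∧ {x | x ∈ l} = X ∧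
    ∀ (i : ℕ) (h : i < l.length), l.get ⟨i, h⟩ ∉ gen {x | x ∈ l.take i}

/-- A facet is a maximal face. -/
def IsFacet {n : ℕ} (X : Set (B n)) : Prop :=
  IsFace X ∧ ∀ Y : Set (B n), IsFace Y → X ⊆ Y → X = Y

/-- Product `x * y₁ * ⋯ * y_k` in `B(n)`. -/
def bprod {n : ℕ} : B n → List (B n) → B n
  | x, [] => x
  | x, y :: l => bprod (bmul x y) l

/-- Closure under the inverse operation `(i,j) ↦ (j,i)`. -/
def InvClosed {n : ℕ} (T : Set (B n)) : Prop :=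
  ∀ i j : Fin n, some (i, j) ∈ T → some (j, i) ∈ T

/-- A nilpotent subsemigroup of `B(n)` containing `0`: some power is `{0}`. -/
def IsNilpSub {n : ℕ} (T : Set (B n)) : Prop :=
  IsSub T ∧ none ∈ T ∧ ∃ k : ℕ, 1 ≤ k ∧
    ∀ (x : B n) (l : List (B n)), x ∈ T → (∀ y ∈ l, y ∈ T) →
      l.length + 1 = k → bprod x l = none

/-!
An element `(i,j)` of `S` belongs to the inverse part when `(j,i) ∈ S` as well, and to the
nilpotent part otherwise. On `{1,…,n}` the relation "`(u,v) ∈ S` but `(v,u) ∉ S`" is a strict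
partial order, so the number of its successors strictly drops along each factor of a nonzero
product from the nilpotent part; hence such a product has at most `n` factors. Conversely, a
nilpotent ideal contains no idempotent `(i,i) = (i,j)(j,i)`, so it cannot contain `(i,j)` when
`(j,i) ∈ S`, while an inverse subsemigroup of `S` only contains such `(i,j)`: the split is forced.
-/

section Brandt

variable {n : ℕ} {S : Set (B n)}

@[simp] lemma bmul_none_left (x : B n) : bmul none x = none := rfl

@[simp] lemma bmul_none_right (x : B n) : bmul x none = none := by
  rcases x with _ | ⟨i, j⟩ <;> rfl

@[simp] lemma bmul_some_some (i j k l : Fin n) :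
    bmul (some (i, j)) (some (k, l)) = if j = k then some (i, l) else none := rfl

lemma bmul_eq_some {x y : B n} {a c : Fin n} :
    bmul x y = some (a, c) ↔ ∃ b, x = some (a, b) ∧ y = some (b, c) := by
  rcases x with _ | ⟨i, j⟩ <;> rcases y with _ | ⟨k, l⟩ <;> simp only [bmul_none_left,
    bmul_none_right, bmul_some_some, reduceCtorEq, false_iff, Option.some.injEq] <;> aesop

@[simp] lemma bprod_none (l : List (B n)) : bprod none l = none := by
  induction l with
  | nil => rfl
  | cons y l ih => exact ih

lemma bprod_append_singleton (x : B n) (l : List (B n)) (y : B n) :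
    bprod x (l ++ [y]) = bmul (bprod x l) y := by
  induction l generalizing x with
  | nil => rfl
  | cons z l ih => exact ih _

lemma bprod_replicate_diag (i : Fin n) (m : ℕ) :
    bprod (some (i, i)) (List.replicate m (some (i, i))) = some (i, i) := by
  induction m with
  | zero => rfl
  | succ m ih => simpa [bprod, List.replicate_succ] using ih

lemma IsSub.some_mem_trans (hS : IsSub S) {i j k : Fin n} (hij : some (i, j) ∈ S)
    (hjk : some (j, k) ∈ S) : some (i, k) ∈ S := by
  simpa using hS _ hij _ hjk

def invPart (S : Set (B n)) : Set (B n) := {x ∈ S | x.map Prod.swap ∈ S}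

def nilPart (S : Set (B n)) : Set (B n) := insert none {x ∈ S | x.map Prod.swap ∉ S}

@[simp] lemma none_mem_invPart : none ∈ invPart S ↔ none ∈ S := by simp [invPart]

@[simp] lemma some_mem_invPart {i j : Fin n} :
    some (i, j) ∈ invPart S ↔ some (i, j) ∈ S ∧ some (j, i) ∈ S := by simp [invPart]

@[simp] lemma none_mem_nilPart : none ∈ nilPart S := Set.mem_insert _ _

@[simp] lemma some_mem_nilPart {i j : Fin n} :
    some (i, j) ∈ nilPart S ↔ some (i, j) ∈ S ∧ some (j, i) ∉ S := by simp [nilPart]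

lemma invPart_subset : invPart S ⊆ S := Set.sep_subset _ _

lemma nilPart_subset (h0 : none ∈ S) : nilPart S ⊆ S :=
  Set.insert_subset h0 (Set.sep_subset _ _)

lemma eq_invPart_union_nilPart (h0 : none ∈ S) : S = invPart S ∪ nilPart S := by
  refine (Set.union_subset invPart_subset (nilPart_subset h0)).antisymm' fun x hx => ?_
  by_cases hswap : x.map Prod.swap ∈ S
  exacts [Or.inl ⟨hx, hswap⟩, Or.inr (Or.inr ⟨hx, hswap⟩)]

lemma isSub_invPart (hS : IsSub S) : IsSub (invPart S) := by
  rintro (_ | ⟨i, j⟩) hx (_ | ⟨k, l⟩) hy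
  · simpa using hx
  · simpa using hx
  · simpa using hy
  rw [some_mem_invPart] at hx hy
  rw [bmul_some_some]
  split_ifs with hjk
  · subst hjk
    exact some_mem_invPart.2 ⟨hS.some_mem_trans hx.1 hy.1, hS.some_mem_trans hy.2 hx.2⟩
  · simpa [hjk] using hS _ hx.1 _ hy.1

lemma invClosed_invPart : InvClosed (invPart S) := fun _ _ h =>
  some_mem_invPart.2 (some_mem_invPart.1 h).symm

lemma bmul_mem_nilPart_of_left_mem (hS : IsSub S) {s x : B n} (hs : s ∈ S)
    (hx : x ∈ nilPart S) : bmul s x ∈ nilPart S := by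
  rcases s with _ | ⟨a, b⟩
  · exact none_mem_nilPart
  rcases x with _ | ⟨i, j⟩
  · simp
  rw [some_mem_nilPart] at hx
  rw [bmul_some_some]
  split_ifs with hbi
  · subst hbi
    exact some_mem_nilPart.2
      ⟨hS.some_mem_trans hs hx.1, fun hja => hx.2 (hS.some_mem_trans hja hs)⟩
  · exact none_mem_nilPart

lemma bmul_mem_nilPart_of_right_mem (hS : IsSub S) {s x : B n} (hs : s ∈ S)
    (hx : x ∈ nilPart S) : bmul x s ∈ nilPart S := by
  rcases x with _ | ⟨i, j⟩
  · exact none_mem_nilPart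
  rcases s with _ | ⟨a, b⟩
  · simp
  rw [some_mem_nilPart] at hx
  rw [bmul_some_some]
  split_ifs with hja
  · subst hja
    exact some_mem_nilPart.2
      ⟨hS.some_mem_trans hx.1 hs, fun hbi => hx.2 (hS.some_mem_trans hs hbi)⟩
  · exact none_mem_nilPart

lemma isSub_nilPart (hS : IsSub S) : IsSub (nilPart S) := by
  rintro x (rfl | ⟨hxS, -⟩) y hy
  exacts [none_mem_nilPart, bmul_mem_nilPart_of_left_mem hS hxS hy]

noncomputable def nilHeight (S : Set (B n)) (u : Fin n) : ℕ :=
  {v | some (u, v) ∈ nilPart S}.ncard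

lemma nilHeight_le (S : Set (B n)) (u : Fin n) : nilHeight S u ≤ n :=
  (Set.ncard_le_card _).trans_eq (Nat.card_eq_fintype_card.trans (Fintype.card_fin n))

lemma nilHeight_lt (hS : IsSub S) {u v : Fin n} (huv : some (u, v) ∈ nilPart S) :
    nilHeight S v < nilHeight S u := by
  refine Set.ncard_lt_ncard ⟨fun w hw => ?_, fun hsub => ?_⟩
  · simpa using bmul_mem_nilPart_of_left_mem hS (some_mem_nilPart.1 huv).1 hw
  · have hvv : some (v, v) ∈ nilPart S := hsub huv
    simp at hvv

lemma nilHeight_add_length_lt (hS : IsSub S) {x : B n} (hx : x ∈ nilPart S)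
    (l : List (B n)) (hl : ∀ y ∈ l, y ∈ nilPart S) {a c : Fin n}
    (hprod : bprod x l = some (a, c)) : nilHeight S c + l.length < nilHeight S a := by
  induction l using List.reverseRecOn generalizing c with
  | nil =>
    subst hprod
    simpa using nilHeight_lt hS hx
  | append_singleton l y ih =>
    rw [bprod_append_singleton, bmul_eq_some] at hprod
    obtain ⟨b, hab, rfl⟩ := hprod
    have hba := ih (fun z hz => hl z (by simp [hz])) hab
    have hbc := nilHeight_lt hS (hl (some (b, c)) (by simp))
    simp only [List.length_append, List.length_singleton]
    omega

lemma isNilpSub_nilPart (hS : IsSub S) : IsNilpSub (nilPart S) := by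
  refine ⟨isSub_nilPart hS, none_mem_nilPart, n + 1, by omega, fun x l hx hl hlen => ?_⟩
  rcases hprod : bprod x l with _ | ⟨a, c⟩
  · rfl
  · have := nilHeight_add_length_lt hS hx l hl hprod
    have := nilHeight_le S a
    omega

lemma IsNilpSub.some_diag_not_mem {T : Set (B n)} (hT : IsNilpSub T) (i : Fin n) :
    some (i, i) ∉ T := by
  obtain ⟨-, -, k, hk, hnil⟩ := hT
  intro hi
  have := hnil _ (List.replicate (k - 1) (some (i, i))) hi
    (fun y hy => List.eq_of_mem_replicate hy ▸ hi) (by simp; omega)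
  simp [bprod_replicate_diag] at this

lemma IsNilpSub.some_swap_not_mem {T N : Set (B n)} (hN : IsNilpSub N)
    (hideal : ∀ s ∈ T, ∀ x ∈ N, bmul x s ∈ N) {i j : Fin n} (hij : some (i, j) ∈ N) :
    some (j, i) ∉ T := fun hji =>
  hN.some_diag_not_mem i (by simpa using hideal _ hji _ hij)

def IsInvNilSplitting (S I N : Set (B n)) : Prop :=
  (IsSub I ∧ none ∈ I ∧ InvClosed I) ∧ IsNilpSub N ∧ I ⊆ S ∧ N ⊆ S ∧
    (∀ s ∈ S, ∀ x ∈ N, bmul s x ∈ N ∧ bmul x s ∈ N) ∧ S = I ∪ N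

lemma isInvNilSplitting_invPart_nilPart (hS : IsSub S) (h0 : none ∈ S) :
    IsInvNilSplitting S (invPart S) (nilPart S) :=
  ⟨⟨isSub_invPart hS, none_mem_invPart.2 h0, invClosed_invPart⟩, isNilpSub_nilPart hS,
    invPart_subset, nilPart_subset h0,
    fun _ hs _ hx =>
      ⟨bmul_mem_nilPart_of_left_mem hS hs hx, bmul_mem_nilPart_of_right_mem hS hs hx⟩,
    eq_invPart_union_nilPart h0⟩

namespace IsInvNilSplitting

variable {I N : Set (B n)}

lemma some_swap_not_mem (h : IsInvNilSplitting S I N) {i j : Fin n} (hij : some (i, j) ∈ N) :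
    some (j, i) ∉ S :=
  h.2.1.some_swap_not_mem (fun s hs x hx => (h.2.2.2.2.1 s hs x hx).2) hij

lemma eq_invPart (h : IsInvNilSplitting S I N) : I = invPart S := by
  have ⟨⟨_, hI0, hIinv⟩, _, hIS, _, _, hSIN⟩ := h
  ext (_ | ⟨i, j⟩)
  · simp [hI0, hIS hI0]
  rw [some_mem_invPart]
  refine ⟨fun hij => ⟨hIS hij, hIS (hIinv _ _ hij)⟩, fun ⟨hij, hji⟩ => ?_⟩
  rcases hSIN ▸ hij with hI | hNij
  exacts [hI, absurd hji (h.some_swap_not_mem hNij)]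

lemma eq_nilPart (h : IsInvNilSplitting S I N) : N = nilPart S := by
  have ⟨⟨_, _, hIinv⟩, hN, hIS, hNS, _, hSIN⟩ := h
  ext (_ | ⟨i, j⟩)
  · simp [hN.2.1]
  rw [some_mem_nilPart]
  refine ⟨fun hij => ⟨hNS hij, h.some_swap_not_mem hij⟩, fun ⟨hij, hji⟩ => ?_⟩
  rcases hSIN ▸ hij with hI | hNij
  exacts [absurd (hIS (hIinv _ _ hI)) hji, hNij]

end IsInvNilSplitting

end Brandt

/-- Every subsemigroup `S` of `B(n)` containing `0` decomposes uniquely as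
`S = I ∪ N` with `I` an inverse subsemigroup of `B(n)` contained in `S`, and `N`
a nilpotent subsemigroup of `B(n)` which is a two-sided ideal of `S`. -/
theorem stmt7 (n : ℕ) (S : Set (B n)) (hS : IsSub S) (h0 : none ∈ S) :
    ∃! p : Set (B n) × Set (B n),
      (IsSub p.1 ∧ none ∈ p.1 ∧ InvClosed p.1) ∧
      IsNilpSub p.2 ∧
      p.1 ⊆ S ∧ p.2 ⊆ S ∧
      (∀ s ∈ S, ∀ x ∈ p.2, bmul s x ∈ p.2 ∧ bmul x s ∈ p.2) ∧
      S = p.1 ∪ p.2 := by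
  refine ⟨(invPart S, nilPart S), isInvNilSplitting_invPart_nilPart hS h0, ?_⟩
  rintro ⟨I, N⟩ (h : IsInvNilSplitting S I N)
  exact Prod.ext h.eq_invPart h.eq_nilPart
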